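/- arXiv:2405.10192 — 2 statements merged into one kernel-verified Lean document; each statement's English description precedes it below -/
import Mathlib

section
/- If $(R, \mathfrak{m})$ is a Noetherian local ring with $\mathrm{depth}\,\mathrm{gr}_\mathfrak{m}(R) > 0$, then for any ideal $I$ and all $k \geq 0$, $I\mathfrak{m}^{k+1} : \mathfrak{m} \subseteq \mathfrak{m}^k$. -/
open Polynomial IsLocalRing

/-- The irrelevant ideal of the Rees algebra `R(J)`, consisting of the elements of
positive degree. -/
def reesIrrelevant {R : Type*} [CommRing R] (J : Ideal R) : Ideal (reesAlgebra J) where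
  carrier := {f | ((f : R[X])).coeff 0 = 0}
  add_mem' := by
    intro a b ha hb
    simp only [Set.mem_setOf_eq] at *
    rw [Subalgebra.coe_add, Polynomial.coeff_add, ha, hb, add_zero]
  zero_mem' := by simp
  smul_mem' := by
    intro c a ha
    simp only [Set.mem_setOf_eq, smul_eq_mul, Subalgebra.coe_mul, Polynomial.mul_coeff_zero] at *
    rw [ha, mul_zero]

/-- The associated graded ring `gr_J(R) = R(J)/J·R(J)`. -/
abbrev assocGraded {R : Type*} [CommRing R] (J : Ideal R) :=
  reesAlgebra J ⧸ Ideal.map (algebraMap R (reesAlgebra J)) J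

section Aux

variable {R : Type*} [CommRing R] {J : Ideal R}

/-- Elements of `J · R(J)` have all coefficients one power deeper. -/
lemma coeff_mem_of_mem_map {g : reesAlgebra J}
    (hg : g ∈ Ideal.map (algebraMap R (reesAlgebra J)) J) (n : ℕ) :
    (g : R[X]).coeff n ∈ J ^ (n + 1) := by
  induction hg using Submodule.span_induction generalizing n with
  | mem v hv =>
      obtain ⟨a, ha, rfl⟩ := hv
      show (Polynomial.C a).coeff n ∈ J ^ (n + 1)
      rw [Polynomial.coeff_C]
      split
      · next h => rw [h, pow_one]; exact ha
      · exact zero_mem _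
  | zero => simp
  | add v w _ _ hv hw =>
      rw [Subalgebra.coe_add, Polynomial.coeff_add]
      exact add_mem (hv n) (hw n)
  | smul r v _ hv =>
      show ((r * v : reesAlgebra J) : R[X]).coeff n ∈ J ^ (n + 1)
      rw [Subalgebra.coe_mul, Polynomial.coeff_mul]
      refine Ideal.sum_mem _ fun p hp => ?_
      have h1 : (r : R[X]).coeff p.1 ∈ J ^ p.1 := r.2 p.1
      have h2 : (v : R[X]).coeff p.2 ∈ J ^ (p.2 + 1) := hv p.2
      have : (r : R[X]).coeff p.1 * (v : R[X]).coeff p.2 ∈ J ^ (p.1 + (p.2 + 1)) := by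
        rw [pow_add]
        exact Ideal.mul_mem_mul h1 h2
      have hpn : p.1 + (p.2 + 1) = n + 1 := by
        have := Finset.HasAntidiagonal.mem_antidiagonal.mp hp
        omega
      rwa [hpn] at this

lemma monomial_mem_map {n : ℕ} {c : R} (hc : c ∈ J ^ (n + 1)) :
    ∀ g : reesAlgebra J, (g : R[X]) = Polynomial.monomial n c →
      g ∈ Ideal.map (algebraMap R (reesAlgebra J)) J := by
  rw [pow_succ'] at hc
  induction hc using Submodule.mul_induction_on' with
  | mem_mul_mem a ha b hb =>
      intro g hg
      have hb' : Polynomial.monomial n b ∈ reesAlgebra J := reesAlgebra.monomial_mem.mpr hb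
      have : g = algebraMap R (reesAlgebra J) a * ⟨Polynomial.monomial n b, hb'⟩ := by
        apply Subtype.ext
        rw [hg]
        show Polynomial.monomial n (a * b) = Polynomial.C a * Polynomial.monomial n b
        rw [Polynomial.C_mul_monomial]
      rw [this]
      exact Ideal.mul_mem_right _ _ (Ideal.mem_map_of_mem _ ha)
  | add x hx y hy ihx ihy =>
      intro g hg
      have hx' : Polynomial.monomial n x ∈ reesAlgebra J :=
        reesAlgebra.monomial_mem.mpr (Ideal.mul_le_right hx)
      have hy' : Polynomial.monomial n y ∈ reesAlgebra J :=
        reesAlgebra.monomial_mem.mpr (Ideal.mul_le_right hy)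
      have : g = ⟨Polynomial.monomial n x, hx'⟩ + ⟨Polynomial.monomial n y, hy'⟩ := by
        apply Subtype.ext
        rw [hg]
        show Polynomial.monomial n (x + y)
          = Polynomial.monomial n x + Polynomial.monomial n y
        rw [map_add]
      rw [this]
      exact add_mem (ihx _ rfl) (ihy _ rfl)

lemma mem_map_of_coeff_mem {g : reesAlgebra J}
    (hg : ∀ n, (g : R[X]).coeff n ∈ J ^ (n + 1)) :
    g ∈ Ideal.map (algebraMap R (reesAlgebra J)) J := by
  have key : g = ∑ i ∈ Finset.range ((g : R[X]).natDegree + 1),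
      (⟨Polynomial.monomial i ((g : R[X]).coeff i),
        reesAlgebra.monomial_mem.mpr (Ideal.pow_le_pow_right (Nat.le_succ i) (hg i))⟩ :
        reesAlgebra J) := by
    apply Subtype.ext
    rw [AddSubmonoidClass.coe_finset_sum]
    exact Polynomial.as_sum_range' _ _ (Nat.lt_succ_self _)
  rw [key]
  exact Ideal.sum_mem _ fun i _ => monomial_mem_map (hg i) _ rfl

lemma mul_colon_mem {x : R} {t : ℕ} (hx : ∀ a ∈ J, a * x ∈ J ^ t)
    {d : ℕ} (hd : 1 ≤ d) {a : R} (ha : a ∈ J ^ d) : a * x ∈ J ^ (d - 1 + t) := by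
  obtain ⟨e, rfl⟩ : ∃ e, d = e + 1 := ⟨d - 1, by omega⟩
  rw [pow_succ] at ha
  simp only [Nat.add_sub_cancel]
  induction ha using Submodule.mul_induction_on' with
  | mem_mul_mem p hp q hq =>
      rw [mul_assoc, pow_add]
      exact Ideal.mul_mem_mul hp (hx q hq)
  | add u hu v hv ihu ihv =>
      rw [add_mul]
      exact add_mem ihu ihv

end Aux

set_option maxHeartbeats 1000000 in
set_option synthInstance.maxHeartbeats 400000 in
/-- If `gr_𝔪(R)` has positive depth, then `I𝔪^(k+1) : 𝔪 ⊆ 𝔪^k` for every ideal `I` and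
all `k ≥ 0`. -/
theorem colon_le_pow_of_depth_assocGraded_pos {R : Type*} [CommRing R] [IsNoetherianRing R]
    [IsLocalRing R]
    (hdepth : ∃ x ∈ maximalIdeal R, x ∈ nonZeroDivisors R)
    (hgr : ∃ y ∈ Ideal.map
        (Ideal.Quotient.mk (Ideal.map (algebraMap R (reesAlgebra (maximalIdeal R)))
          (maximalIdeal R))) (reesIrrelevant (maximalIdeal R)),
      y ∈ nonZeroDivisors (assocGraded (maximalIdeal R))) :
    ∀ (I : Ideal R) (k : ℕ),
      Submodule.colon (I * maximalIdeal R ^ (k + 1)) (maximalIdeal R) ≤ maximalIdeal R ^ k := by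
  classical
  intro I k x hx
  set 𝔪 := maximalIdeal R
  by_contra hxk
  -- x·𝔪 ⊆ 𝔪^(k+1)
  have hxc : ∀ a ∈ 𝔪, a * x ∈ 𝔪 ^ (k + 1) := by
    intro a ha
    have h := Submodule.mem_colon.mp hx a ha
    rw [smul_eq_mul] at h
    rw [mul_comm]
    exact Ideal.mul_le_right h
  -- choose maximal j with x ∈ 𝔪^j
  have hex : ∃ n, x ∉ 𝔪 ^ n := ⟨k, hxk⟩
  set j0 := Nat.find hex with hj0
  have hj0pos : 1 ≤ j0 := by
    rcases Nat.eq_zero_or_pos j0 with h | h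
    · have hs := Nat.find_spec hex
      rw [← hj0, h] at hs
      simp at hs
    · exact h
  set j := j0 - 1 with hjdef
  have hj : x ∈ 𝔪 ^ j := by
    by_contra h
    exact absurd (Nat.find_min hex (show j < j0 by omega)) (by simp [h])
  have hj1 : x ∉ 𝔪 ^ (j + 1) := by
    have : j + 1 = j0 := by omega
    rw [this]
    exact Nat.find_spec hex
  have hjk : j + 1 ≤ k := by
    have : j0 ≤ k := Nat.find_le hxk
    omega
  obtain ⟨y, hy_mem, hy_nzd⟩ := hgr
  obtain ⟨f, hf, rfl⟩ := Ideal.mem_map_iff_of_surjective _ Ideal.Quotient.mk_surjective |>.mp hy_mem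
  have hf0 : (f : R[X]).coeff 0 = 0 := hf
  set ξ : reesAlgebra 𝔪 := ⟨Polynomial.monomial j x, reesAlgebra.monomial_mem.mpr hj⟩ with hξ
  set mk := Ideal.Quotient.mk (Ideal.map (algebraMap R (reesAlgebra 𝔪)) 𝔪)
  have hξne : mk ξ ≠ 0 := by
    intro h
    have := coeff_mem_of_mem_map (Ideal.Quotient.eq_zero_iff_mem.mp h) j
    rw [hξ] at this
    simp only [Polynomial.coeff_monomial, if_pos rfl] at this
    exact hj1 this
  have hfξ : f * ξ ∈ Ideal.map (algebraMap R (reesAlgebra 𝔪)) 𝔪 := by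
    apply mem_map_of_coeff_mem
    intro n
    have hcoe : ((f * ξ : reesAlgebra 𝔪) : R[X]) = (f : R[X]) * Polynomial.monomial j x := rfl
    rw [hcoe]
    rcases lt_or_ge n j with hnj | hnj
    · have : ((f : R[X]) * Polynomial.monomial j x).coeff n = 0 := by
        rw [Polynomial.coeff_mul]
        refine Finset.sum_eq_zero fun p hp => ?_
        have hpn := Finset.HasAntidiagonal.mem_antidiagonal.mp hp
        rw [Polynomial.coeff_monomial, if_neg (by omega)]
        ring
      rw [this]
      exact zero_mem _
    · obtain ⟨d, rfl⟩ : ∃ d, n = d + j := ⟨n - j, by omega⟩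
      rw [Polynomial.coeff_mul_monomial]
      rcases Nat.eq_zero_or_pos d with rfl | hd
      · rw [hf0, zero_mul]; exact zero_mem _
      · have hfd : (f : R[X]).coeff d ∈ 𝔪 ^ d := f.2 d
        have := mul_colon_mem hxc hd hfd
        exact Ideal.pow_le_pow_right (by omega) this
  have hmul : mk ξ * mk f = 0 := by
    rw [← map_mul, mul_comm]
    exact Ideal.Quotient.eq_zero_iff_mem.mpr hfξ
  exact hξne (hy_nzd.2 (mk ξ) hmul)
end

section
/- Let $I$ be a minimal reduction of $\mathfrak{m}$, set $s = s(\mathfrak{m}) = \min\{n \geq 1 : \widetilde{\mathfrak{m}^i} = \mathfrak{m}^i \text{ for all } i \geq n\}$, and assume $s \geq 3$ and $I\widetilde{\mathfrak{m}^{s-2}} = I\mathfrak{m}^{s-2}$. If $I\widetilde{\mathfrak{m}^k} = \widetilde{\mathfrak{m}^{k+1}}$ holds for all $k \geq \mathrm{r}_I(\mathfrak{m})$, then $\mathrm{r}_I(\mathfrak{m}) \geq s - 1$. -/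
open IsLocalRing

variable {R : Type*} [CommRing R] [IsLocalRing R]

/-- The Ratliff-Rush closure `⋃ₘ (I^(m+1) : I^m)` of an ideal `I`. -/
noncomputable def ratliffRush (I : Ideal R) : Ideal R :=
  ⨆ m : ℕ, Submodule.colon (I ^ (m + 1)) ((I ^ m : Ideal R) : Set R)

/-- `I` is a reduction of `J`. -/
def IsReduction (I J : Ideal R) : Prop :=
  I ≤ J ∧ ∃ r : ℕ, I * J ^ r = J ^ (r + 1)

/-- `I` is a minimal reduction of `J`. -/
def IsMinimalReduction (I J : Ideal R) : Prop :=
  IsReduction I J ∧ ∀ I' : Ideal R, I' ≤ I → IsReduction I' J → I' = I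

/-- The reduction number `r_I(J)` of `J` with respect to a reduction `I`. -/
noncomputable def reductionNumber (I J : Ideal R) : ℕ :=
  sInf {m | I * J ^ m = J ^ (m + 1)}

/-- The stabilization index `s(𝔪) = min {n ≥ 1 | (𝔪^i)~ = 𝔪^i for all i ≥ n}`. -/
noncomputable def ratliffRushIndex (J : Ideal R) : ℕ :=
  sInf {n | 1 ≤ n ∧ ∀ i ≥ n, ratliffRush (J ^ i) = J ^ i}

/-- `R` is Cohen-Macaulay local: the maximal ideal contains a regular sequence whose
length equals the Krull dimension. -/
def IsCohenMacaulayLocal (R : Type*) [CommRing R] [IsLocalRing R] : Prop :=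
  ∃ rs : List R, (∀ x ∈ rs, x ∈ maximalIdeal R) ∧ RingTheory.Sequence.IsRegular R rs ∧
    (rs.length : WithBot (WithTop ℕ)) = ringKrullDim R

lemma le_ratliffRush (I : Ideal R) : I ≤ ratliffRush I := by
  refine le_trans ?_ (le_iSup (fun m => Submodule.colon (I ^ (m + 1)) ((I ^ m : Ideal R) : Set R)) 0)
  intro x hx
  rw [Submodule.mem_colon]
  intro p hp
  rw [smul_eq_mul, zero_add, pow_one]
  exact Ideal.mul_mem_right _ _ hx

/-- If `I` is a minimal reduction of `𝔪`, `s = s(𝔪) ≥ 3`, `I·(𝔪^(s-2))~ = I𝔪^(s-2)`, and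
`I·(𝔪^k)~ = (𝔪^(k+1))~` for all `k ≥ r_I(𝔪)`, then `r_I(𝔪) ≥ s - 1`. -/
theorem reductionNumber_ge_of {R : Type*} [CommRing R] [IsNoetherianRing R] [IsLocalRing R]
    [Infinite (IsLocalRing.ResidueField R)]
    (hCM : IsCohenMacaulayLocal R) (hdim : 2 ≤ ringKrullDim R)
    (I : Ideal R) (hI : IsMinimalReduction I (maximalIdeal R))
    (hs : 3 ≤ ratliffRushIndex (maximalIdeal R))
    (hIs : I * ratliffRush (maximalIdeal R ^ (ratliffRushIndex (maximalIdeal R) - 2)) =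
      I * maximalIdeal R ^ (ratliffRushIndex (maximalIdeal R) - 2))
    (hMafi : ∀ k ≥ reductionNumber I (maximalIdeal R),
      I * ratliffRush (maximalIdeal R ^ k) = ratliffRush (maximalIdeal R ^ (k + 1))) :
    ratliffRushIndex (maximalIdeal R) - 1 ≤ reductionNumber I (maximalIdeal R) := by
  have hsInf : ratliffRushIndex (maximalIdeal R) = sInf {n | 1 ≤ n ∧ ∀ i ≥ n,
      ratliffRush (maximalIdeal R ^ i) = maximalIdeal R ^ i} := rfl
  set s := ratliffRushIndex (maximalIdeal R) with hsdef
  by_contra h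
  push_neg at h
  have hr : reductionNumber I (maximalIdeal R) ≤ s - 2 := by omega
  have hne : {n | 1 ≤ n ∧ ∀ i ≥ n,
      ratliffRush (maximalIdeal R ^ i) = maximalIdeal R ^ i}.Nonempty :=
    Nat.nonempty_of_pos_sInf (by rw [← hsInf]; omega)
  have hmem := Nat.sInf_mem hne
  rw [← hsInf] at hmem
  have hM := hMafi (s - 2) hr
  have hkey : ratliffRush (maximalIdeal R ^ (s - 1)) = maximalIdeal R ^ (s - 1) := by
    apply le_antisymm
    · rw [show s - 1 = s - 2 + 1 by omega, ← hM, hIs]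
      calc I * maximalIdeal R ^ (s - 2)
          ≤ maximalIdeal R * maximalIdeal R ^ (s - 2) :=
            Ideal.mul_mono_left hI.1.1
        _ = maximalIdeal R ^ (s - 2 + 1) := (pow_succ' _ _).symm
    · exact le_ratliffRush _
  have hmem' : s - 1 ∈ {n | 1 ≤ n ∧ ∀ i ≥ n,
      ratliffRush (maximalIdeal R ^ i) = maximalIdeal R ^ i} := by
    refine ⟨by omega, fun i hi => ?_⟩
    rcases eq_or_lt_of_le hi with hi' | hi'
    · rw [← hi']; exact hkey
    · exact hmem.2 i (by omega)
  have := Nat.sInf_le hmem'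
  rw [← hsInf] at this
  omega
end
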